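/- arXiv:1810.04062 — 8 statements merged into one kernel-verified Lean document; each statement's English description precedes it below -/
import Mathlib

section
/- Let H and K be complex Hilbert spaces, M and N closed subspaces of H, and A, B : H → K bounded linear operators. There exists a bounded linear operator C : H → K such that C x = A x for all x ∈ M and C x = B x for all x ∈ N if and only if the range of A* − B* is contained in the (algebraic) sum M^⊥ + N^⊥. -/
/-!
Taking adjoints, `C = A` on `M` means that `A† - C†` maps into `Mᗮ`, and likewise for `N`.
So a `C` exists iff `A† - B† = P + Q` for bounded `P`, `Q` with ranges in `Mᗮ` and `Nᗮ`.
Pointwise such a splitting exists by the hypothesis on the range, and it becomes unique once the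
`Mᗮ`-component is taken in `(Mᗮ ⊓ Nᗮ)ᗮ`: then `A† - B†` factors through the injective bounded map
`(u, v) ↦ u + v`, and the closed graph theorem makes the factor bounded.
-/

namespace ContinuousLinearMap

section Factorization

variable {𝕜 E F G : Type*} [NontriviallyNormedField 𝕜]
  [NormedAddCommGroup E] [NormedSpace 𝕜 E] [CompleteSpace E]
  [NormedAddCommGroup F] [NormedSpace 𝕜 F]
  [NormedAddCommGroup G] [NormedSpace 𝕜 G] [CompleteSpace G]

theorem exists_comp_eq_of_range_le {Φ : E →L[𝕜] F} (hΦ : Function.Injective Φ) {T : G →L[𝕜] F}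
    (hT : T.range ≤ Φ.range) : ∃ S : G →L[𝕜] E, Φ ∘L S = T := by
  let S : G →ₗ[𝕜] E := (LinearEquiv.ofInjective (Φ : E →ₗ[𝕜] F) hΦ).symm.toLinearMap ∘ₗ
    (T : G →ₗ[𝕜] F).codRestrict _ fun y => hT ⟨y, rfl⟩
  have hΦS : ∀ y, Φ (S y) = T y := fun y =>
    congrArg Subtype.val ((LinearEquiv.ofInjective (Φ : E →ₗ[𝕜] F) hΦ).apply_symm_apply _)
  refine ⟨ofSeqClosedGraph (g := S) fun u x z hu hSu => ?_, ext hΦS⟩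
  refine hΦ (tendsto_nhds_unique ((Φ.continuous.tendsto z).comp hSu) ?_)
  simpa [Function.comp_def, hΦS] using (T.continuous.tendsto x).comp hu

end Factorization

section InnerProductSpace

variable {𝕜 E F G : Type*} [RCLike 𝕜] [NormedAddCommGroup E] [InnerProductSpace 𝕜 E]

theorem coprod_subtypeL_inf_orthogonal_injective (U V : Submodule 𝕜 E) :
    Function.Injective ((U ⊓ (U ⊓ V)ᗮ).subtypeL.coprod V.subtypeL) := by
  refine (injective_iff_map_eq_zero _).2 fun ⟨⟨u, hu⟩, ⟨v, hv⟩⟩ huv => ?_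
  have huv : u + v = 0 := huv
  have huV : u ∈ V := by simpa [eq_neg_of_add_eq_zero_left huv] using V.neg_mem hv
  have hu0 : u = 0 :=
    Submodule.disjoint_def.mp (U ⊓ V).orthogonal_disjoint u ⟨hu.1, huV⟩ hu.2
  subst hu0
  simp_all

theorem sup_le_range_coprod_subtypeL_inf_orthogonal (U V : Submodule 𝕜 E)
    [(U ⊓ V).HasOrthogonalProjection] :
    U ⊔ V ≤ ((U ⊓ (U ⊓ V)ᗮ).subtypeL.coprod V.subtypeL).range := by
  set W := U ⊓ V
  have hPW : ∀ u, W.starProjection u ∈ W := W.starProjection_apply_mem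
  refine sup_le (fun u hu => ?_) (fun v hv => ⟨(0, ⟨v, hv⟩), by simp⟩)
  -- `u = (u - P_W u) + P_W u`, and `P_W u ∈ W ≤ V`.
  refine ⟨(⟨u - W.starProjection u, U.sub_mem hu (hPW u).1, W.sub_starProjection_mem_orthogonal u⟩,
    ⟨W.starProjection u, (hPW u).2⟩), by simp⟩

variable [CompleteSpace E]
variable [NormedAddCommGroup G] [NormedSpace 𝕜 G] [CompleteSpace G]

theorem exists_add_eq_of_range_le_sup {U V : Submodule 𝕜 E} (hU : IsClosed (U : Set E))
    (hV : IsClosed (V : Set E)) {T : G →L[𝕜] E} (hT : T.range ≤ U ⊔ V) :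
    ∃ P Q : G →L[𝕜] E, P.range ≤ U ∧ Q.range ≤ V ∧ P + Q = T := by
  have : CompleteSpace ↥(U ⊓ V) := (hU.inter hV).completeSpace_coe
  have : CompleteSpace V := hV.completeSpace_coe
  have : CompleteSpace ↥(U ⊓ (U ⊓ V)ᗮ) :=
    (hU.inter (U ⊓ V).isClosed_orthogonal).completeSpace_coe
  obtain ⟨S, hS⟩ := exists_comp_eq_of_range_le (coprod_subtypeL_inf_orthogonal_injective U V)
    (hT.trans (sup_le_range_coprod_subtypeL_inf_orthogonal U V))
  refine ⟨(U ⊓ (U ⊓ V)ᗮ).subtypeL ∘L fst _ _ _ ∘L S, V.subtypeL ∘L snd _ _ _ ∘L S, ?_, ?_, ?_⟩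
  · rintro _ ⟨y, rfl⟩
    exact (S y).1.2.1
  · rintro _ ⟨y, rfl⟩
    exact (S y).2.2
  · rw [← hS]
    ext y
    simp

variable [NormedAddCommGroup F] [InnerProductSpace 𝕜 F] [CompleteSpace F]

theorem range_adjoint_le_orthogonal_iff (T : E →L[𝕜] F) (M : Submodule 𝕜 E) :
    (adjoint T).range ≤ Mᗮ ↔ M ≤ T.ker := by
  rw [← Submodule.isOrtho_iff_le, Submodule.isOrtho_comm, Submodule.isOrtho_iff_le,
    orthogonal_range, adjoint_adjoint]

theorem forall_mem_eq_iff_range_adjoint_sub_le (A C : E →L[𝕜] F) (M : Submodule 𝕜 E) :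
    (∀ x ∈ M, C x = A x) ↔ (adjoint A - adjoint C).range ≤ Mᗮ := by
  rw [← map_sub, range_adjoint_le_orthogonal_iff]
  simp only [SetLike.le_def, LinearMap.mem_ker, coe_coe, sub_apply, sub_eq_zero]
  exact forall₂_congr fun _ _ => eq_comm

end InnerProductSpace

end ContinuousLinearMap

open ContinuousLinearMap in
theorem stmt_0_general {H K : Type*} [NormedAddCommGroup H] [InnerProductSpace ℂ H] [CompleteSpace H]
    [NormedAddCommGroup K] [InnerProductSpace ℂ K] [CompleteSpace K]
    (M N : Submodule ℂ H)
    (A B : H →L[ℂ] K) :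
    (∃ C : H →L[ℂ] K, (∀ x ∈ M, C x = A x) ∧ (∀ x ∈ N, C x = B x)) ↔
      LinearMap.range ((ContinuousLinearMap.adjoint A - ContinuousLinearMap.adjoint B : K →L[ℂ] H) : K →ₗ[ℂ] H) ≤
        Mᗮ ⊔ Nᗮ := by
  simp_rw [forall_mem_eq_iff_range_adjoint_sub_le]
  constructor
  · rintro ⟨C, hM, hN⟩ _ ⟨y, rfl⟩
    simpa using Submodule.sub_mem_sup (hM ⟨y, rfl⟩) (hN ⟨y, rfl⟩)
  · intro h
    obtain ⟨P, Q, hP, hQ, hPQ⟩ :=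
      exists_add_eq_of_range_le_sup M.isClosed_orthogonal N.isClosed_orthogonal h
    refine ⟨adjoint (adjoint A - P), ?_, ?_⟩
    · rwa [adjoint_adjoint, sub_sub_cancel]
    · have hBP : adjoint B - (adjoint A - P) = -Q := by
        rw [eq_sub_of_add_eq' hPQ]
        abel
      rwa [adjoint_adjoint, hBP, toLinearMap_neg, LinearMap.range_neg]

theorem stmt_0 {H K : Type*} [NormedAddCommGroup H] [InnerProductSpace ℂ H] [CompleteSpace H]
    [NormedAddCommGroup K] [InnerProductSpace ℂ K] [CompleteSpace K]
    (M N : Submodule ℂ H) (hM : IsClosed (M : Set H)) (hN : IsClosed (N : Set H))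
    (A B : H →L[ℂ] K) :
    (∃ C : H →L[ℂ] K, (∀ x ∈ M, C x = A x) ∧ (∀ x ∈ N, C x = B x)) ↔
      LinearMap.range ((ContinuousLinearMap.adjoint A - ContinuousLinearMap.adjoint B : K →L[ℂ] H) : K →ₗ[ℂ] H) ≤
        Mᗮ ⊔ Nᗮ :=
  stmt_0_general M N A B
end

section
/- Let H and K be complex Hilbert spaces, M and N closed subspaces of H, and A, B : H → K bounded linear operators. There exists a closed partially defined linear operator C from H to K (i.e., an unbounded operator whose graph is a closed subspace of H × K) whose domain contains M + N and which satisfies C x = A x for all x ∈ M and C x = B x for all x ∈ N, if and only if the preimage (A* − B*)⁻¹(M^⊥ + N^⊥) is dense in K. -/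
/-!
An operator as required exists iff the closure of
`G = {(x, A x) | x ∈ M} + {(x, B x) | x ∈ N}` in `H × K` is a graph, i.e. contains no `(0, k)`
with `k ≠ 0`. In the Hilbert sum of `H` and `K` the closure of `G` is `Gᗮᗮ`, and `(u, v) ⊥ G`
means `u + A* v ∈ Mᗮ` and `u + B* v ∈ Nᗮ`; eliminating `u`, the second coordinates of `Gᗮ` form
exactly `V = (A* - B*)⁻¹(Mᗮ + Nᗮ)`. So `(0, k)` lies in the closure of `G` iff `k ⊥ V`, and the
closure is a graph iff `Vᗮ = 0`, i.e. iff `V` is dense.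
-/

open ContinuousLinearMap
open scoped InnerProductSpace

section Algebra

variable {R E F : Type*} [Ring R] [AddCommGroup E] [Module R E] [AddCommGroup F] [Module R F]

theorem LinearPMap.coe_graph (f : E →ₗ.[R] F) :
    (f.graph : Set (E × F)) = Set.range fun d : f.domain => ((d : E), f d) := by
  ext x
  exact f.mem_graph_iff'

theorem LinearMap.toPMap_le_iff (A : E →ₗ[R] F) (M : Submodule R E) (f : E →ₗ.[R] F) :
    A.toPMap M ≤ f ↔ M ≤ f.domain ∧ ∀ d : f.domain, (d : E) ∈ M → f d = A d := by
  constructor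
  · rintro ⟨hle, heq⟩
    exact ⟨hle, fun d hd => (heq (x := ⟨d, hd⟩) rfl).symm⟩
  · rintro ⟨hle, heq⟩
    refine ⟨hle, fun x d hxd => ?_⟩
    change A x = f d
    rw [hxd, heq d (hxd ▸ x.2)]

theorem Submodule.exists_add_mem_and_add_mem_iff (P Q : Submodule R E) (a b : E) :
    (∃ u, u + a ∈ P ∧ u + b ∈ Q) ↔ a - b ∈ P ⊔ Q := by
  constructor
  · rintro ⟨u, hp, hq⟩
    rw [show a - b = (u + a) - (u + b) by abel]
    exact sub_mem (mem_sup_left hp) (mem_sup_right hq)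
  · intro h
    obtain ⟨p, hp, q, hq, hpq⟩ := mem_sup.1 h
    refine ⟨-q - b, ?_, by simpa using neg_mem hq⟩
    rw [show -q - b + a = p by rw [eq_sub_of_add_eq hpq]; abel]
    exact hp

end Algebra

section Topology

variable {R E F : Type*} [CommRing R] [AddCommGroup E] [Module R E] [AddCommGroup F] [Module R F]
  [TopologicalSpace E] [TopologicalSpace F] [ContinuousAdd E] [ContinuousAdd F]
  [ContinuousConstSMul R E] [ContinuousConstSMul R F]

theorem LinearPMap.exists_isClosed_graph_ge_iff (g : Submodule R (E × F)) :
    (∃ f : E →ₗ.[R] F, f.IsClosed ∧ g ≤ f.graph) ↔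
      ∀ x ∈ g.topologicalClosure, x.1 = 0 → x.2 = 0 := by
  constructor
  · rintro ⟨f, hf, hgf⟩ x hx hx0
    exact f.graph_fst_eq_zero_snd (g.topologicalClosure_minimal hgf hf hx) hx0
  · intro hg
    refine ⟨g.topologicalClosure.toLinearPMap, ?_, ?_⟩
    · rw [IsClosed, Submodule.toLinearPMap_graph_eq _ hg]
      exact g.isClosed_topologicalClosure
    · rw [Submodule.toLinearPMap_graph_eq _ hg]
      exact g.le_topologicalClosure

end Topology

section Hilbert

variable {𝕜 E F : Type*} [RCLike 𝕜] [NormedAddCommGroup E] [InnerProductSpace 𝕜 E]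
  [NormedAddCommGroup F] [InnerProductSpace 𝕜 F] [CompleteSpace E] [CompleteSpace F]

/-- The closure is `gᗮᗮ` in the Hilbert sum `WithLp 2 (E × F)`, whose vectors `(u, v)` pair with
`(x, y)` as `⟪u, x⟫ + ⟪v, y⟫`. -/
theorem Submodule.mem_topologicalClosure_prod_iff (g : Submodule 𝕜 (E × F)) (z : E × F) :
    z ∈ g.topologicalClosure ↔ ∀ u v,
      g ≤ LinearMap.ker ((innerₛₗ 𝕜 u).coprod (innerₛₗ 𝕜 v)) → ⟪u, z.1⟫_𝕜 + ⟪v, z.2⟫_𝕜 = 0 := by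
  let e := WithLp.prodContinuousLinearEquiv 2 𝕜 E F
  let g' := g.comap (e : WithLp 2 (E × F) →ₗ[𝕜] E × F)
  have hclosure : z ∈ g.topologicalClosure ↔ e.symm z ∈ g'.topologicalClosure := by
    rw [← SetLike.mem_coe, ← SetLike.mem_coe, topologicalClosure_coe, topologicalClosure_coe]
    change z ∈ closure ↑g ↔ e.symm z ∈ closure (e ⁻¹' ↑g)
    rw [← e.preimage_closure, Set.mem_preimage, e.apply_symm_apply]
  have horth (u : E) (v : F) : WithLp.toLp 2 (u, v) ∈ g'ᗮ ↔
      g ≤ LinearMap.ker ((innerₛₗ 𝕜 u).coprod (innerₛₗ 𝕜 v)) := by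
    rw [mem_orthogonal']
    exact ⟨fun h x hx => h (e.symm x) hx, fun h w hw => h hw⟩
  rw [hclosure, ← orthogonal_orthogonal_eq_closure, mem_orthogonal]
  constructor
  · intro h u v huv
    exact h _ ((horth u v).2 huv)
  · intro h w hw
    exact h w.fst w.snd ((horth _ _).1 hw)

theorem ContinuousLinearMap.toPMap_graph_le_ker_iff (A : E →L[𝕜] F) (M : Submodule 𝕜 E)
    (u : E) (v : F) :
    ((A : E →ₗ[𝕜] F).toPMap M).graph ≤ LinearMap.ker ((innerₛₗ 𝕜 u).coprod (innerₛₗ 𝕜 v)) ↔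
      u + adjoint A v ∈ Mᗮ := by
  have hinner (x : E) : ⟪u + adjoint A v, x⟫_𝕜 = ⟪u, x⟫_𝕜 + ⟪v, A x⟫_𝕜 := by
    rw [inner_add_left, adjoint_inner_left]
  simp_rw [SetLike.le_def, LinearPMap.mem_graph_iff', LinearMap.mem_ker, LinearMap.coprod_apply,
    innerₛₗ_apply_apply, Submodule.mem_orthogonal', hinner]
  constructor
  · intro h x hx
    exact h ⟨⟨x, hx⟩, rfl⟩
  · rintro h _ ⟨x, rfl⟩
    exact h x x.2

theorem ContinuousLinearMap.mk_zero_mem_closure_graph_sup_iff (A B : E →L[𝕜] F)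
    (M N : Submodule 𝕜 E) (k : F) :
    ((0 : E), k) ∈ (((A : E →ₗ[𝕜] F).toPMap M).graph ⊔
        ((B : E →ₗ[𝕜] F).toPMap N).graph).topologicalClosure ↔
      k ∈ ((Mᗮ ⊔ Nᗮ).comap (adjoint A - adjoint B).toLinearMap)ᗮ := by
  rw [Submodule.mem_topologicalClosure_prod_iff, Submodule.mem_orthogonal, forall_comm]
  refine forall_congr' fun v => ?_
  simp only [sup_le_iff, toPMap_graph_le_ker_iff, inner_zero_right, zero_add]
  rw [Submodule.mem_comap, coe_coe, sub_apply, ← Submodule.exists_add_mem_and_add_mem_iff,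
    forall_exists_index]

theorem ContinuousLinearMap.closure_graph_sup_isGraph_iff_dense (A B : E →L[𝕜] F)
    (M N : Submodule 𝕜 E) :
    (∀ x ∈ (((A : E →ₗ[𝕜] F).toPMap M).graph ⊔
        ((B : E →ₗ[𝕜] F).toPMap N).graph).topologicalClosure, x.1 = 0 → x.2 = 0) ↔
      Dense {k : F | (adjoint A - adjoint B) k ∈ Mᗮ ⊔ Nᗮ} := by
  change _ ↔ Dense (((Mᗮ ⊔ Nᗮ).comap (adjoint A - adjoint B).toLinearMap : Submodule 𝕜 F) : Set F)
  rw [Submodule.dense_iff_topologicalClosure_eq_top, Submodule.topologicalClosure_eq_top_iff,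
    Submodule.eq_bot_iff]
  constructor
  · intro h k hk
    exact h (0, k) ((mk_zero_mem_closure_graph_sup_iff A B M N k).2 hk) rfl
  · rintro h ⟨_, k⟩ hx rfl
    exact h k ((mk_zero_mem_closure_graph_sup_iff A B M N k).1 hx)

end Hilbert

theorem stmt_1_general {H K : Type*} [NormedAddCommGroup H] [InnerProductSpace ℂ H] [CompleteSpace H]
    [NormedAddCommGroup K] [InnerProductSpace ℂ K] [CompleteSpace K]
    (M N : Submodule ℂ H)
    (A B : H →L[ℂ] K) :
    (∃ (D : Submodule ℂ H) (C : D →ₗ[ℂ] K),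
        IsClosed (Set.range fun d : D => ((d : H), C d)) ∧
        M ⊔ N ≤ D ∧
        (∀ d : D, (d : H) ∈ M → C d = A (d : H)) ∧
        (∀ d : D, (d : H) ∈ N → C d = B (d : H))) ↔
      Dense {k : K |
        (ContinuousLinearMap.adjoint A - ContinuousLinearMap.adjoint B) k ∈ Mᗮ ⊔ Nᗮ} := by
  rw [← closure_graph_sup_isGraph_iff_dense, ← LinearPMap.exists_isClosed_graph_ge_iff]
  simp only [sup_le_iff, LinearPMap.le_graph_iff, LinearMap.toPMap_le_iff, LinearPMap.IsClosed,
    LinearPMap.coe_graph, coe_coe]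
  constructor
  · rintro ⟨D, C, hC, ⟨hM, hN⟩, hA, hB⟩
    exact ⟨⟨D, C⟩, hC, ⟨hM, hA⟩, hN, hB⟩
  · rintro ⟨f, hf, ⟨hM, hA⟩, hN, hB⟩
    exact ⟨f.domain, f.toFun, hf, ⟨hM, hN⟩, hA, hB⟩

theorem stmt_1 {H K : Type*} [NormedAddCommGroup H] [InnerProductSpace ℂ H] [CompleteSpace H]
    [NormedAddCommGroup K] [InnerProductSpace ℂ K] [CompleteSpace K]
    (M N : Submodule ℂ H) (hM : IsClosed (M : Set H)) (hN : IsClosed (N : Set H))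
    (A B : H →L[ℂ] K) :
    (∃ (D : Submodule ℂ H) (C : D →ₗ[ℂ] K),
        IsClosed (Set.range fun d : D => ((d : H), C d)) ∧
        M ⊔ N ≤ D ∧
        (∀ d : D, (d : H) ∈ M → C d = A (d : H)) ∧
        (∀ d : D, (d : H) ∈ N → C d = B (d : H))) ↔
      Dense {k : K |
        (ContinuousLinearMap.adjoint A - ContinuousLinearMap.adjoint B) k ∈ Mᗮ ⊔ Nᗮ} :=
  stmt_1_general M N A B
end

section
/- Let H be a complex Hilbert space, K a nontrivial complex Hilbert space, and M, N closed subspaces of H. The following are equivalent: (i) for every pair of bounded linear operators A, B : H → K that coincide on M ∩ N there exists a bounded linear operator C : H → K with C x = A x for all x ∈ M and C x = B x for all x ∈ N; (ii) the subspace M + N is closed in H. -/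
/-!
(ii) ⇒ (i): on the Banach space `M + N` the map `m + n ↦ A m + B n` is well defined because
`A = B` on `M ∩ N`, and it is continuous because `(m, n) ↦ m + n` is a quotient map from `M × N`
onto `M + N` by the open mapping theorem; compose it with the orthogonal projection onto `M + N`.

(i) ⇒ (ii): with `W = (M ∩ N)ᗮ` we have `M + N = M + (N ∩ W)`. Extending the pair
`0, ⟪P_W u, ·⟫ • k` (with `k ≠ 0`) gives, for each `u`, a bound `|⟪n, u⟫| ≤ c_u ‖m + n‖` for
`m ∈ M`, `n ∈ N ∩ W`. The uniform boundedness principle turns this into `‖n‖ ≤ c ‖m + n‖`, so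
`(m, n) ↦ m + n` is bounded below on the Banach space `M × (N ∩ W)` and has closed range.
-/

open scoped InnerProductSpace

section InnerProductSpace

variable {𝕜 E : Type*} [RCLike 𝕜] [NormedAddCommGroup E] [InnerProductSpace 𝕜 E]
  [CompleteSpace E]

theorem exists_norm_le_of_forall_exists_norm_inner_le {ι : Type*} {v : ι → E}
    (h : ∀ u, ∃ c, ∀ i, ‖⟪v i, u⟫_𝕜‖ ≤ c) : ∃ c, ∀ i, ‖v i‖ ≤ c := by
  obtain ⟨c, hc⟩ := banach_steinhaus (g := fun i => innerSL 𝕜 (v i)) h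
  exact ⟨c, fun i => (innerSL_apply_norm 𝕜 (v i)).symm.trans_le (hc i)⟩

theorem exists_norm_le_mul_norm_add_of_forall_norm_inner_le {s t : Set E}
    (h : ∀ u, ∃ c ≥ 0, ∀ m ∈ s, ∀ n ∈ t, ‖⟪n, u⟫_𝕜‖ ≤ c * ‖m + n‖) :
    ∃ c, ∀ m ∈ s, ∀ n ∈ t, ‖n‖ ≤ c * ‖m + n‖ := by
  let v : {p : E × E // p.1 ∈ s ∧ p.2 ∈ t} → E :=
    fun p => ((‖p.1.1 + p.1.2‖⁻¹ : ℝ) : 𝕜) • p.1.2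
  have hv (p) : ‖v p‖ = ‖p.1.1 + p.1.2‖⁻¹ * ‖p.1.2‖ := by
    simp [v, norm_smul]
  obtain ⟨c, hc⟩ := exists_norm_le_of_forall_exists_norm_inner_le (𝕜 := 𝕜) (v := v) fun u => by
    obtain ⟨c, hc0, hc⟩ := h u
    refine ⟨c, fun ⟨⟨m, n⟩, hm, hn⟩ => ?_⟩
    rw [inner_smul_left, norm_mul, RCLike.norm_conj, RCLike.norm_ofReal, abs_inv, abs_norm]
    calc ‖m + n‖⁻¹ * ‖⟪n, u⟫_𝕜‖ ≤ ‖m + n‖⁻¹ * (c * ‖m + n‖) := by gcongr; exact hc m hm n hn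
      _ ≤ c := by
        rcases eq_or_ne ‖m + n‖ 0 with h0 | h0
        · simpa [h0] using hc0
        · rw [mul_comm c, inv_mul_cancel_left₀ h0]
  refine ⟨c, fun m hm n hn => ?_⟩
  have hcmn := hc ⟨(m, n), hm, hn⟩
  rcases eq_or_ne ‖m + n‖ 0 with h0 | h0
  · -- the hypothesis at `u = n` forces `n = 0`
    obtain ⟨c', -, hc'⟩ := h n
    have hn0 := hc' m hm n hn
    rw [h0, mul_zero, inner_self_eq_norm_sq_to_K] at hn0
    simp only [norm_pow, RCLike.norm_ofReal, abs_norm] at hn0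
    rw [h0, mul_zero]
    nlinarith [norm_nonneg n]
  · rw [hv, inv_mul_le_iff₀ (lt_of_le_of_ne (norm_nonneg _) h0.symm)] at hcmn
    linarith

end InnerProductSpace

namespace Submodule

section Banach

variable {𝕜 E F : Type*} [NontriviallyNormedField 𝕜] [NormedAddCommGroup E] [NormedSpace 𝕜 E]
  [CompleteSpace E] [NormedAddCommGroup F] [NormedSpace 𝕜 F] {M N : Submodule 𝕜 E}

theorem isClosed_sup_of_norm_le_mul_norm_add (hM : IsClosed (M : Set E))
    (hN : IsClosed (N : Set E)) {c : ℝ} (h : ∀ m ∈ M, ∀ n ∈ N, ‖n‖ ≤ c * ‖m + n‖) :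
    IsClosed ((M ⊔ N : Submodule 𝕜 E) : Set E) := by
  have := hM.completeSpace_coe
  have := hN.completeSpace_coe
  let T : M × N →L[𝕜] E := M.subtypeL.coprod N.subtypeL
  have hrange : ((M ⊔ N : Submodule 𝕜 E) : Set E) = Set.range T := by
    have : LinearMap.range (T : M × N →ₗ[𝕜] E) = M ⊔ N := by
      simp [T, LinearMap.range_coprod]
    rw [← this, LinearMap.coe_range]
    rfl
  have hT : AntilipschitzWith ⟨max c 0 + 1, by positivity⟩ T := by
    refine T.antilipschitz_of_bound fun p => ?_
    change ‖p‖ ≤ (max c 0 + 1) * ‖(p.1 : E) + p.2‖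
    have hn : ‖(p.2 : E)‖ ≤ max c 0 * ‖(p.1 : E) + p.2‖ :=
      (h _ p.1.2 _ p.2.2).trans (by gcongr; exact le_max_left _ _)
    have hm : ‖(p.1 : E)‖ ≤ ‖(p.1 : E) + p.2‖ + ‖(p.2 : E)‖ := by
      simpa using norm_sub_le ((p.1 : E) + p.2) p.2
    rw [norm_prod_le_iff]
    change ‖(p.1 : E)‖ ≤ _ ∧ ‖(p.2 : E)‖ ≤ _
    constructor <;> nlinarith [norm_nonneg ((p.1 : E) + p.2), le_max_right c 0]
  rw [hrange]
  exact hT.isClosed_range T.uniformContinuous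

theorem exists_continuousLinearMap_sup_apply_add (hM : IsClosed (M : Set E))
    (hN : IsClosed (N : Set E)) (hMN : IsClosed ((M ⊔ N : Submodule 𝕜 E) : Set E))
    (A B : E →L[𝕜] F) (hAB : ∀ x ∈ M ⊓ N, A x = B x) :
    ∃ L : ↥(M ⊔ N) →L[𝕜] F, ∀ (m : M) (n : N),
      L ⟨m + n, add_mem_sup m.2 n.2⟩ = A m + B n := by
  have := hM.completeSpace_coe
  have := hN.completeSpace_coe
  have := hMN.completeSpace_coe
  let ℓ : ↥(M ⊔ N) →ₗ[𝕜] F :=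
    ((A.toLinearMap.toPMap M).sup (B.toLinearMap.toPMap N) fun x y hxy =>
      (hAB x ⟨x.2, hxy ▸ y.2⟩).trans (congrArg B hxy)).toFun
  have hℓ (m : M) (n : N) : ℓ ⟨m + n, add_mem_sup m.2 n.2⟩ = A m + B n :=
    LinearPMap.sup_apply (f := A.toLinearMap.toPMap M) (g := B.toLinearMap.toPMap N) _ m n _ rfl
  let T : M × N →L[𝕜] ↥(M ⊔ N) :=
    (M.subtypeL.coprod N.subtypeL).codRestrict _ fun p => add_mem_sup p.1.2 p.2.2
  have hT : Function.Surjective T := by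
    rintro ⟨x, hx⟩
    obtain ⟨m, hm, n, hn, rfl⟩ := mem_sup.1 hx
    exact ⟨(⟨m, hm⟩, ⟨n, hn⟩), rfl⟩
  have hcont : Continuous ℓ := by
    refine (T.isQuotientMap hT).continuous_iff.2 ?_
    have : ℓ ∘ T = fun p => A p.1 + B p.2 := funext fun p => hℓ p.1 p.2
    rw [this]
    fun_prop
  exact ⟨⟨ℓ, hcont⟩, hℓ⟩

end Banach

section Hilbert

variable {𝕜 E F : Type*} [RCLike 𝕜] [NormedAddCommGroup E] [InnerProductSpace 𝕜 E]
  [NormedAddCommGroup F] [NormedSpace 𝕜 F] {M N : Submodule 𝕜 E}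

theorem exists_norm_inner_le_of_extension [Nontrivial F] [(M ⊓ N).HasOrthogonalProjection]
    (hext : ∀ A B : E →L[𝕜] F, (∀ x ∈ M ⊓ N, A x = B x) →
      ∃ C : E →L[𝕜] F, (∀ x ∈ M, C x = A x) ∧ (∀ x ∈ N, C x = B x)) (u : E) :
    ∃ c ≥ 0, ∀ m ∈ M, ∀ n ∈ N ⊓ (M ⊓ N)ᗮ, ‖⟪n, u⟫_𝕜‖ ≤ c * ‖m + n‖ := by
  obtain ⟨k, hk⟩ := exists_ne (0 : F)
  let v := (M ⊓ N)ᗮ.starProjection u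
  have hv : v ∈ (M ⊓ N)ᗮ := (M ⊓ N)ᗮ.starProjection_apply_mem u
  obtain ⟨C, hCM, hCN⟩ := hext 0 ((innerSL 𝕜 v).smulRight k) fun x hx => by
    simp [inner_left_of_mem_orthogonal hx hv]
  refine ⟨‖C‖ / ‖k‖, by positivity, fun m hm n hn => ?_⟩
  have hCmn : C (m + n) = ⟪u, n⟫_𝕜 • k := by
    rw [map_add, hCM m hm, hCN n hn.1, zero_apply, zero_add,
      ContinuousLinearMap.smulRight_apply, innerSL_apply_apply, inner_starProjection_left_eq_right,
      starProjection_eq_self_iff.2 hn.2]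
  rw [div_mul_eq_mul_div, le_div_iff₀ (norm_pos_iff.2 hk), norm_inner_symm, ← norm_smul, ← hCmn]
  exact C.le_opNorm _

variable [CompleteSpace E]

theorem isClosed_sup_of_extension [Nontrivial F] (hM : IsClosed (M : Set E))
    (hN : IsClosed (N : Set E))
    (hext : ∀ A B : E →L[𝕜] F, (∀ x ∈ M ⊓ N, A x = B x) →
      ∃ C : E →L[𝕜] F, (∀ x ∈ M, C x = A x) ∧ (∀ x ∈ N, C x = B x)) :
    IsClosed ((M ⊔ N : Submodule 𝕜 E) : Set E) := by
  have : CompleteSpace ↥(M ⊓ N) := (hM.inter hN).completeSpace_coe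
  obtain ⟨c, hc⟩ := exists_norm_le_mul_norm_add_of_forall_norm_inner_le
    (s := (M : Set E)) (t := ((N ⊓ (M ⊓ N)ᗮ : Submodule 𝕜 E) : Set E))
    (exists_norm_inner_le_of_extension hext)
  have hsup : M ⊔ N ⊓ (M ⊓ N)ᗮ = M ⊔ N :=
    calc M ⊔ N ⊓ (M ⊓ N)ᗮ = M ⊔ (M ⊓ N ⊔ (M ⊓ N)ᗮ ⊓ N) := by
          rw [← sup_assoc, sup_of_le_left (inf_le_left : M ⊓ N ≤ M), inf_comm]
      _ = M ⊔ N := by rw [sup_orthogonal_inf_of_hasOrthogonalProjection inf_le_right]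
  rw [← hsup]
  exact isClosed_sup_of_norm_le_mul_norm_add hM (hN.inter (M ⊓ N).isClosed_orthogonal) hc

theorem exists_extension_of_isClosed_sup (hM : IsClosed (M : Set E)) (hN : IsClosed (N : Set E))
    (hMN : IsClosed ((M ⊔ N : Submodule 𝕜 E) : Set E)) (A B : E →L[𝕜] F)
    (hAB : ∀ x ∈ M ⊓ N, A x = B x) :
    ∃ C : E →L[𝕜] F, (∀ x ∈ M, C x = A x) ∧ (∀ x ∈ N, C x = B x) := by
  obtain ⟨L, hL⟩ := exists_continuousLinearMap_sup_apply_add hM hN hMN A B hAB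
  have : CompleteSpace ↥(M ⊔ N) := hMN.completeSpace_coe
  refine ⟨L ∘L (M ⊔ N).orthogonalProjectionOnto, fun x hx => ?_, fun x hx => ?_⟩
  · change L ((M ⊔ N).orthogonalProjectionOnto (⟨x, mem_sup_left hx⟩ : ↥(M ⊔ N))) = A x
    rw [orthogonalProjectionOnto_mem_subspace_eq_self]
    simpa using hL ⟨x, hx⟩ 0
  · change L ((M ⊔ N).orthogonalProjectionOnto (⟨x, mem_sup_right hx⟩ : ↥(M ⊔ N))) = B x
    rw [orthogonalProjectionOnto_mem_subspace_eq_self]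
    simpa using hL 0 ⟨x, hx⟩

end Hilbert

end Submodule

theorem stmt_2_general {H K : Type*} [NormedAddCommGroup H] [InnerProductSpace ℂ H] [CompleteSpace H]
    [NormedAddCommGroup K] [InnerProductSpace ℂ K] [Nontrivial K]
    (M N : Submodule ℂ H) (hM : IsClosed (M : Set H)) (hN : IsClosed (N : Set H)) :
    (∀ A B : H →L[ℂ] K, (∀ x ∈ M ⊓ N, A x = B x) →
        ∃ C : H →L[ℂ] K, (∀ x ∈ M, C x = A x) ∧ (∀ x ∈ N, C x = B x)) ↔
      IsClosed ((M ⊔ N : Submodule ℂ H) : Set H) :=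
  ⟨Submodule.isClosed_sup_of_extension hM hN,
    fun hMN => Submodule.exists_extension_of_isClosed_sup hM hN hMN⟩

theorem stmt_2 {H K : Type*} [NormedAddCommGroup H] [InnerProductSpace ℂ H] [CompleteSpace H]
    [NormedAddCommGroup K] [InnerProductSpace ℂ K] [CompleteSpace K] [Nontrivial K]
    (M N : Submodule ℂ H) (hM : IsClosed (M : Set H)) (hN : IsClosed (N : Set H)) :
    (∀ A B : H →L[ℂ] K, (∀ x ∈ M ⊓ N, A x = B x) →
        ∃ C : H →L[ℂ] K, (∀ x ∈ M, C x = A x) ∧ (∀ x ∈ N, C x = B x)) ↔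
      IsClosed ((M ⊔ N : Submodule ℂ H) : Set H) :=
  stmt_2_general M N hM hN
end

section
/- Let H and K be complex Hilbert spaces with H infinite-dimensional, and let A, B : H → K be bounded linear operators. The following are equivalent: (i) for every pair of closed subspaces M, N of H such that A and B coincide on M ∩ N, there exists a bounded linear operator C : H → K with C x = A x for all x ∈ M and C x = B x for all x ∈ N; (ii) A = B. -/
/-!
If `C` agrees with `A` on `M` and with `B` on `N`, then `‖(B - A) n‖ ≤ ‖C - A‖ * ‖n - m‖` for
`m ∈ M`, `n ∈ N`. Given `y` and an orthonormal family `aₖ = e (.inl k)`, `bₖ = e (.inr k)`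
orthogonal to `y` (this needs infinite dimension), the closed spans
`M` of `v + 2ᵏ bₖ + 2⁻ᵏ aₖ` and `N` of `v + 2ᵏ bₖ` meet only in `0` for every `v ⊥ aₖ, bₖ`, although
their generators are `2⁻ᵏ` apart. Hence `‖(B - A) (v + 2ᵏ bₖ)‖ = O(2⁻ᵏ)` both for `v = y` and for
`v = 0`, and subtracting gives `(B - A) y = 0`.
-/

open scoped InnerProductSpace
open Filter Topology

section

open Submodule Set

variable {𝕜 E F : Type*}

section Normed

variable [NontriviallyNormedField 𝕜] [SeminormedAddCommGroup E] [NormedSpace 𝕜 E]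
  [SeminormedAddCommGroup F] [NormedSpace 𝕜 F]

theorem ContinuousLinearMap.norm_sub_apply_le_of_eqOn {A B C : E →L[𝕜] F} {M N : Set E}
    (hM : EqOn C A M) (hN : EqOn C B N) {m n : E} (hm : m ∈ M) (hn : n ∈ N) :
    ‖(B - A) n‖ ≤ ‖C - A‖ * ‖n - m‖ := by
  have : (B - A) n = (C - A) (n - m) := by
    simp only [sub_apply, map_sub, hN hn, hM hm, sub_self, sub_zero]
  exact this ▸ (C - A).le_opNorm (n - m)

end Normed

section Inner

variable [RCLike 𝕜] [NormedAddCommGroup E] [InnerProductSpace 𝕜 E]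

theorem inner_eq_zero_of_mem_closure_span {ι : Type*} {g : ι → E} {y x : E}
    (h : ∀ j, ⟪y, g j⟫_𝕜 = 0) (hx : x ∈ (span 𝕜 (range g)).topologicalClosure) :
    ⟪y, x⟫_𝕜 = 0 :=
  (span 𝕜 (range g)).topologicalClosure_minimal (span_le.2 (range_subset_iff.2 h))
    (innerSL 𝕜 y).isClosed_ker hx

theorem exists_orthonormal_nat [CompleteSpace E] (hE : ¬FiniteDimensional 𝕜 E) :
    ∃ e : ℕ → E, Orthonormal 𝕜 e := by
  obtain ⟨w, b, hb⟩ := exists_hilbertBasis 𝕜 E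
  have : Infinite w := not_finite_iff_infinite.1 fun _ ↦
    have := Fintype.ofFinite w
    hE b.toOrthonormalBasis.toBasis.finiteDimensional_of_finite
  exact ⟨_, hb ▸ b.orthonormal.comp _ (Infinite.natEmbedding w).injective⟩

theorem exists_orthonormal_sum_nat_orthogonal [CompleteSpace E] (hE : ¬FiniteDimensional 𝕜 E)
    (y : E) : ∃ e : ℕ ⊕ ℕ → E, Orthonormal 𝕜 e ∧ ∀ i, ⟪e i, y⟫_𝕜 = 0 := by
  have hV : ¬FiniteDimensional 𝕜 (𝕜 ∙ y)ᗮ := fun hfin ↦ by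
    have := finiteDimensional_sup (𝕜 ∙ y) (𝕜 ∙ y)ᗮ
    rw [sup_orthogonal_of_hasOrthogonalProjection] at this
    exact hE (topEquiv.finiteDimensional)
  obtain ⟨e, he⟩ := exists_orthonormal_nat hV
  refine ⟨fun i ↦ e (Equiv.natSumNatEquivNat i),
    (he.comp _ Equiv.natSumNatEquivNat.injective).comp_linearIsometry (𝕜 ∙ y)ᗮ.subtypeₗᵢ, ?_⟩
  exact fun i ↦ mem_orthogonal_singleton_iff_inner_left.1 (e _).2

theorem inner_tsum_right {ι : Type*} {f : ι → E} (hf : Summable f) (z : E) :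
    ⟪z, ∑' i, f i⟫_𝕜 = ∑' i, ⟪z, f i⟫_𝕜 :=
  (innerSL 𝕜 z).map_tsum hf

variable (𝕜) in
noncomputable def genN (e : ℕ ⊕ ℕ → E) (v : E) (k : ℕ) : E := v + (2 : 𝕜) ^ k • e (.inr k)

variable (𝕜) in
noncomputable def genM (e : ℕ ⊕ ℕ → E) (v : E) (k : ℕ) : E :=
  genN 𝕜 e v k + (2 : 𝕜)⁻¹ ^ k • e (.inl k)

variable {e : ℕ ⊕ ℕ → E} {v : E}

theorem genN_sub_genM (k : ℕ) :
    genN 𝕜 e v k - genM 𝕜 e v k = -((2 : 𝕜)⁻¹ ^ k • e (.inl k)) := by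
  simp [genM]

theorem inner_inl_genN (he : Orthonormal 𝕜 e) (hv : ∀ i, ⟪e i, v⟫_𝕜 = 0) (k j : ℕ) :
    ⟪e (.inl k), genN 𝕜 e v j⟫_𝕜 = 0 := by
  simp [genN, inner_add_right, inner_smul_right, hv, orthonormal_iff_ite.1 he]

theorem inner_inr_sub_four_pow_smul_inl_genM (he : Orthonormal 𝕜 e) (hv : ∀ i, ⟪e i, v⟫_𝕜 = 0) (k j : ℕ) :
    ⟪e (.inr k) - (4 : 𝕜) ^ k • e (.inl k), genM 𝕜 e v j⟫_𝕜 = 0 := by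
  rcases eq_or_ne k j with rfl | hkj
  · simp [genM, genN, inner_add_right, inner_smul_right, inner_sub_left, inner_smul_left, hv,
      orthonormal_iff_ite.1 he, he.1 _, map_ofNat, show (4 : 𝕜) = 2 * 2 by norm_num, mul_pow]
  · simp [genM, genN, inner_add_right, inner_smul_right, inner_sub_left, inner_smul_left, hv,
      orthonormal_iff_ite.1 he, hkj]

theorem norm_sub_apply_genN_le [NormedAddCommGroup F] [NormedSpace 𝕜 F] {A B C : E →L[𝕜] F}
    (he : Orthonormal 𝕜 e) (hM : EqOn C A (span 𝕜 (range (genM 𝕜 e v))).topologicalClosure)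
    (hN : EqOn C B (span 𝕜 (range (genN 𝕜 e v))).topologicalClosure) (k : ℕ) :
    ‖(B - A) (genN 𝕜 e v k)‖ ≤ ‖C - A‖ * 2⁻¹ ^ k := by
  have hmem {g : ℕ → E} : g k ∈ (span 𝕜 (range g)).topologicalClosure :=
    le_topologicalClosure _ (subset_span (mem_range_self k))
  simpa [genN_sub_genM, norm_smul, he.1 _] using
    ContinuousLinearMap.norm_sub_apply_le_of_eqOn hM hN hmem hmem

variable [CompleteSpace E]

theorem summable_inv_two_pow_smul_inr (he : Orthonormal 𝕜 e) :
    Summable fun k ↦ (2 : 𝕜)⁻¹ ^ k • e (.inr k) := by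
  refine .of_norm ?_
  simpa [norm_smul, he.1 _] using summable_geometric_two

theorem inner_genN_tsum (he : Orthonormal 𝕜 e) (hv : ∀ i, ⟪e i, v⟫_𝕜 = 0) (j : ℕ) :
    ⟪genN 𝕜 e v j, ∑' k, (2 : 𝕜)⁻¹ ^ k • e (.inr k)⟫_𝕜 = 1 := by
  rw [inner_tsum_right (summable_inv_two_pow_smul_inr he), tsum_eq_single j fun k hk ↦ ?_]
  · simp [genN, inner_add_left, inner_smul_left, inner_smul_right, inner_eq_zero_symm.1 (hv _),
      he.1 _, map_ofNat]
  · simp [genN, inner_add_left, inner_smul_left, inner_smul_right, inner_eq_zero_symm.1 (hv _),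
      orthonormal_iff_ite.1 he, Ne.symm hk]

theorem closure_span_genM_inf_closure_span_genN_eq_bot (he : Orthonormal 𝕜 e)
    (hv : ∀ i, ⟪e i, v⟫_𝕜 = 0) :
    (span 𝕜 (range (genM 𝕜 e v))).topologicalClosure ⊓
      (span 𝕜 (range (genN 𝕜 e v))).topologicalClosure = ⊥ := by
  refine eq_bot_iff.2 fun x ⟨hxM, hxN⟩ ↦ (mem_bot 𝕜).2 ?_
  have ha k : ⟪e (.inl k), x⟫_𝕜 = 0 :=
    inner_eq_zero_of_mem_closure_span (inner_inl_genN he hv k) hxN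
  have hb k : ⟪x, e (.inr k)⟫_𝕜 = 0 := by
    have := inner_eq_zero_of_mem_closure_span (inner_inr_sub_four_pow_smul_inl_genM he hv k) hxM
    rw [inner_sub_left, inner_smul_left, ha, mul_zero, sub_zero] at this
    exact inner_eq_zero_symm.1 this
  -- `⟪genN 𝕜 e v j, w⟫ = 1` for all `j`, so `v - ⟪v, v⟫ • w` is orthogonal to `N`.
  set w := ∑' k, (2 : 𝕜)⁻¹ ^ k • e (.inr k)
  have hxw : ⟪x, w⟫_𝕜 = 0 := by
    rw [inner_tsum_right (summable_inv_two_pow_smul_inr he)]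
    simp [inner_smul_right, hb]
  have hvx : ⟪v, x⟫_𝕜 = 0 := by
    have := inner_eq_zero_of_mem_closure_span (y := v - ⟪v, v⟫_𝕜 • w) (fun j ↦ inner_eq_zero_symm.1
      (by rw [inner_sub_right, inner_smul_right, inner_genN_tsum he hv, mul_one, sub_eq_zero]
          simp [genN, inner_add_left, inner_smul_left, hv])) hxN
    rwa [inner_sub_left, inner_smul_left, inner_eq_zero_symm.1 hxw, mul_zero, sub_zero] at this
  refine inner_self_eq_zero.1 (inner_eq_zero_of_mem_closure_span (fun j ↦ ?_) hxN)
  simp [genN, inner_add_right, inner_smul_right, inner_eq_zero_symm.1 hvx, hb]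

end Inner

end

theorem stmt_3_general {H K : Type*} [NormedAddCommGroup H] [InnerProductSpace ℂ H] [CompleteSpace H]
    [NormedAddCommGroup K] [InnerProductSpace ℂ K]
    (hH : ¬ FiniteDimensional ℂ H) (A B : H →L[ℂ] K) :
    (∀ M N : Submodule ℂ H, IsClosed (M : Set H) → IsClosed (N : Set H) →
        (∀ x ∈ M ⊓ N, A x = B x) →
        ∃ C : H →L[ℂ] K, (∀ x ∈ M, C x = A x) ∧ (∀ x ∈ N, C x = B x)) ↔
      A = B := by
  refine ⟨fun hext ↦ ?_, by rintro rfl M N - - -; exact ⟨A, fun _ _ ↦ rfl, fun _ _ ↦ rfl⟩⟩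
  ext y
  obtain ⟨e, he, hey⟩ := exists_orthonormal_sum_nat_orthogonal hH y
  have bound (v : H) (hv : ∀ i, ⟪e i, v⟫_ℂ = 0) :
      ∃ c : ℝ, ∀ k, ‖(B - A) (genN ℂ e v k)‖ ≤ c * 2⁻¹ ^ k := by
    obtain ⟨C, hCM, hCN⟩ := hext (Submodule.span ℂ (Set.range (genM ℂ e v))).topologicalClosure
      (Submodule.span ℂ (Set.range (genN ℂ e v))).topologicalClosure
      (Submodule.isClosed_topologicalClosure _) (Submodule.isClosed_topologicalClosure _)
      (by simp [closure_span_genM_inf_closure_span_genN_eq_bot he hv])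
    exact ⟨‖C - A‖, norm_sub_apply_genN_le he hCM hCN⟩
  obtain ⟨c₁, hc₁⟩ := bound y hey
  obtain ⟨c₀, hc₀⟩ := bound 0 (by simp)
  have hy k : ‖(B - A) y‖ ≤ (c₁ + c₀) * 2⁻¹ ^ k := by
    calc ‖(B - A) y‖ = ‖(B - A) (genN ℂ e y k) - (B - A) (genN ℂ e 0 k)‖ := by
          rw [← map_sub]; simp [genN]
      _ ≤ ‖(B - A) (genN ℂ e y k)‖ + ‖(B - A) (genN ℂ e 0 k)‖ := norm_sub_le _ _
      _ ≤ (c₁ + c₀) * 2⁻¹ ^ k := by linarith [hc₁ k, hc₀ k]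
  have hlim : Tendsto (fun k : ℕ ↦ (c₁ + c₀) * (2⁻¹ : ℝ) ^ k) atTop (𝓝 0) := by
    simpa using (tendsto_pow_atTop_nhds_zero_of_lt_one (r := (2⁻¹ : ℝ)) (by norm_num)
      (by norm_num)).const_mul (c₁ + c₀)
  exact (sub_eq_zero.1 (norm_le_zero_iff.1 (ge_of_tendsto' hlim hy))).symm

theorem stmt_3 {H K : Type*} [NormedAddCommGroup H] [InnerProductSpace ℂ H] [CompleteSpace H]
    [NormedAddCommGroup K] [InnerProductSpace ℂ K] [CompleteSpace K]
    (hH : ¬ FiniteDimensional ℂ H) (A B : H →L[ℂ] K) :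
    (∀ M N : Submodule ℂ H, IsClosed (M : Set H) → IsClosed (N : Set H) →
        (∀ x ∈ M ⊓ N, A x = B x) →
        ∃ C : H →L[ℂ] K, (∀ x ∈ M, C x = A x) ∧ (∀ x ∈ N, C x = B x)) ↔
      A = B :=
  stmt_3_general hH A B
end

section
/- Let H be a complex Hilbert space, S and R subspaces (not necessarily closed) of H with the closure of R contained in the closure of S, and let V be a closed subspace of H with V^⊥ ⊆ S. Let P denote the orthogonal projection of H onto the closed subspace V ∩ cl(S), where cl(S) is the topological closure of S. Then S + R is a closed subspace of H if and only if (V ∩ S) + P(R) is a closed subspace of H. -/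
/-!
Let `W = V ⊓ cl S` and `P` the orthogonal projection onto `W`. Since `Vᗮ ≤ S`, on `cl S` the
projection `P` agrees with the projection onto `V`, so `r - P r ∈ Vᗮ` for every `r ∈ R`. Together
with the modular law `S = Vᗮ ⊔ (V ⊓ S)` this gives `S ⊔ R = Vᗮ ⊔ T` with `T = (V ⊓ S) ⊔ P(R) ≤ V`.
Finally, for `T ≤ V` the subspace `Vᗮ ⊔ T` is the preimage of `T` under the projection onto `V`,
and `T = (Vᗮ ⊔ T) ⊓ V`, so one is closed iff the other is.
-/

/-- The orthogonal projection of a Hilbert space onto a closed subspace,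
as a continuous linear operator on the whole space. -/
noncomputable def projCLM {H : Type*} [NormedAddCommGroup H] [InnerProductSpace ℂ H]
    [CompleteSpace H] (W : Submodule ℂ H) (hW : IsClosed (W : Set H)) : H →L[ℂ] H :=
  haveI : CompleteSpace W := hW.completeSpace_coe
  W.subtypeL.comp (Submodule.orthogonalProjectionOnto W)

theorem projCLM_eq_starProjection {H : Type*} [NormedAddCommGroup H] [InnerProductSpace ℂ H]
    [CompleteSpace H] (W : Submodule ℂ H) (hW : IsClosed (W : Set H))
    [W.HasOrthogonalProjection] : projCLM W hW = W.starProjection :=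
  rfl

namespace Submodule

theorem sup_map_eq_of_sub_mem {R M : Type*} [Ring R] [AddCommGroup M] [Module R M]
    (N L : Submodule R M) (f : M →ₗ[R] M) (h : ∀ x ∈ L, x - f x ∈ N) :
    N ⊔ L.map f = N ⊔ L := by
  apply le_antisymm
  · refine sup_le le_sup_left ?_
    rintro _ ⟨x, hx, rfl⟩
    rw [← sub_sub_cancel x (f x)]
    exact sub_mem (mem_sup_right hx) (mem_sup_left (h x hx))
  · refine sup_le le_sup_left fun x hx => ?_
    rw [← sub_add_cancel x (f x)]
    exact add_mem (mem_sup_left (h x hx)) (mem_sup_right ⟨x, hx, rfl⟩)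

variable {𝕜 E : Type*} [RCLike 𝕜] [NormedAddCommGroup E] [InnerProductSpace 𝕜 E]

theorem mem_orthogonal_sup_iff_starProjection_mem {K T : Submodule 𝕜 E}
    [K.HasOrthogonalProjection] (hT : T ≤ K) {x : E} :
    x ∈ Kᗮ ⊔ T ↔ K.starProjection x ∈ T := by
  constructor
  · intro hx
    obtain ⟨u, hu, t, ht, rfl⟩ := mem_sup.mp hx
    rwa [map_add, K.starProjection_apply_eq_zero_iff.mpr hu,
      starProjection_eq_self_iff.mpr (hT ht), zero_add]
  · intro hx
    rw [← sub_add_cancel x (K.starProjection x)]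
    exact add_mem (mem_sup_left (sub_starProjection_mem_orthogonal x)) (mem_sup_right hx)

theorem isClosed_orthogonal_sup_iff {K T : Submodule 𝕜 E} [K.HasOrthogonalProjection]
    (hT : T ≤ K) : IsClosed ((Kᗮ ⊔ T : Submodule 𝕜 E) : Set E) ↔ IsClosed (T : Set E) := by
  constructor
  · intro hclosed
    have hinter : (T : Set E) = ((Kᗮ ⊔ T : Submodule 𝕜 E) : Set E) ∩ (Kᗮᗮ : Submodule 𝕜 E) := by
      ext x
      simp only [Set.mem_inter_iff, SetLike.mem_coe, orthogonal_orthogonal]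
      refine ⟨fun hx => ⟨mem_sup_right hx, hT hx⟩, fun ⟨hx, hxK⟩ => ?_⟩
      rwa [mem_orthogonal_sup_iff_starProjection_mem hT, starProjection_eq_self_iff.mpr hxK] at hx
    rw [hinter]
    exact hclosed.inter (isClosed_orthogonal _)
  · intro hclosed
    have hpre : ((Kᗮ ⊔ T : Submodule 𝕜 E) : Set E) = K.starProjection ⁻¹' T := by
      ext x
      exact mem_orthogonal_sup_iff_starProjection_mem hT
    rw [hpre]
    exact hclosed.preimage K.starProjection.continuous

theorem starProjection_inf_apply_of_orthogonal_le {V U : Submodule 𝕜 E}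
    [V.HasOrthogonalProjection] [(V ⊓ U).HasOrthogonalProjection] (hVU : Vᗮ ≤ U) {x : E}
    (hx : x ∈ U) : (V ⊓ U).starProjection x = V.starProjection x := by
  have hsub := sub_starProjection_mem_orthogonal (K := V) x
  refine eq_starProjection_of_mem_orthogonal ⟨V.starProjection_apply_mem x, ?_⟩
    (orthogonal_le inf_le_left hsub)
  rw [← sub_sub_cancel x (V.starProjection x)]
  exact sub_mem hx (hVU hsub)

end Submodule

open Submodule in
theorem stmt_6 {H : Type*} [NormedAddCommGroup H] [InnerProductSpace ℂ H] [CompleteSpace H]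
    (S R : Submodule ℂ H) (hRS : R.topologicalClosure ≤ S.topologicalClosure)
    (V : Submodule ℂ H) (hV : IsClosed (V : Set H)) (hVS : Vᗮ ≤ S) :
    IsClosed ((S ⊔ R : Submodule ℂ H) : Set H) ↔
      IsClosed ((((V ⊓ S) ⊔ Submodule.map
          ((projCLM (V ⊓ S.topologicalClosure)
            (by rw [Submodule.coe_inf]; exact hV.inter S.isClosed_topologicalClosure)) : H →ₗ[ℂ] H) R :
        Submodule ℂ H)) : Set H) := by
  have : CompleteSpace V := hV.completeSpace_coe
  have : CompleteSpace (V ⊓ S.topologicalClosure : Submodule ℂ H) :=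
    (hV.inter S.isClosed_topologicalClosure).completeSpace_coe
  rw [projCLM_eq_starProjection]
  set P := (V ⊓ S.topologicalClosure).starProjection
  have hRP : ∀ r ∈ R, r - P r ∈ Vᗮ := fun r hr => by
    rw [starProjection_inf_apply_of_orthogonal_le (hVS.trans S.le_topologicalClosure)
      (hRS (R.le_topologicalClosure hr))]
    exact sub_starProjection_mem_orthogonal r
  have hsum : S ⊔ R = Vᗮ ⊔ ((V ⊓ S) ⊔ R.map (P : H →ₗ[ℂ] H)) := by
    calc S ⊔ R = (Vᗮ ⊔ R) ⊔ V ⊓ S := by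
          conv_lhs => rw [← sup_orthogonal_inf_of_hasOrthogonalProjection hVS,
            orthogonal_orthogonal]
          ac_rfl
      _ = Vᗮ ⊔ ((V ⊓ S) ⊔ R.map (P : H →ₗ[ℂ] H)) := by
          rw [← sup_map_eq_of_sub_mem _ _ _ hRP]
          ac_rfl
  have hT : (V ⊓ S) ⊔ R.map (P : H →ₗ[ℂ] H) ≤ V := by
    refine sup_le inf_le_left ?_
    rintro _ ⟨r, -, rfl⟩
    exact (mem_inf.mp (starProjection_apply_mem _ r)).1
  rw [hsum]
  exact isClosed_orthogonal_sup_iff hT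
end

section
/- Let F, H, K be complex Hilbert spaces and A : F → H, B : F → K bounded linear operators with ker A ⊆ ker B. Then the subspace {(A x, B x) : x ∈ F} of H × K is closed if and only if range(A*) + range(B*) is a closed subspace of F. -/
/-!
The graph `{(A x, B x)}` is the range of `T : x ↦ (A x, B x)` into the Hilbert space `H × K`
(the `L²` product), and `T* (h, k) = A* h + B* k`, so `range T* = range A* + range B*`. The claim
is thus the closed range theorem `IsClosed (range T) ↔ IsClosed (range T*)`. If `range T` is
closed, the open mapping theorem gives `‖y‖ ≤ C ‖T* y‖` for `y ∈ range T`, so `T*` is bounded below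
on the complete space `range T` and has closed image there; as `T*` vanishes on
`(range T)ᗮ = ker T*`, that image is all of `range T*`. The converse is the same statement for `T*`.
-/

open scoped InnerProductSpace

namespace ContinuousLinearMap

section ClosedRange

variable {𝕜 E G : Type*} [RCLike 𝕜]
  [NormedAddCommGroup E] [InnerProductSpace 𝕜 E] [CompleteSpace E]
  [NormedAddCommGroup G] [InnerProductSpace 𝕜 G] [CompleteSpace G]

lemma exists_antilipschitzWith_adjoint_comp_subtypeL_range (T : E →L[𝕜] G)
    (hT : IsClosed (T.range : Set G)) :
    ∃ C, AntilipschitzWith C (adjoint T ∘L T.range.subtypeL) := by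
  have : CompleteSpace T.range := hT.completeSpace_coe
  obtain ⟨C, hC, hpre⟩ := T.rangeRestrict.exists_preimage_norm_le (LinearMap.range_eq_top.mp
    (LinearMap.range_rangeRestrict (T : E →ₗ[𝕜] G)))
  refine ⟨⟨C, hC.le⟩, antilipschitz_of_bound _ fun y ↦ ?_⟩
  obtain ⟨x, rfl, hx⟩ := hpre y
  have key : ‖T x‖ ^ 2 ≤ ‖adjoint T (T x)‖ * (C * ‖T x‖) := calc
    ‖T x‖ ^ 2 = ‖⟪adjoint T (T x), x⟫_𝕜‖ := by
      rw [adjoint_inner_left, inner_self_eq_norm_sq_to_K, norm_pow, RCLike.norm_ofReal, abs_norm]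
    _ ≤ ‖adjoint T (T x)‖ * ‖x‖ := norm_inner_le_norm _ _
    _ ≤ ‖adjoint T (T x)‖ * (C * ‖T x‖) := by gcongr; exact hx
  change ‖T x‖ ≤ C * ‖adjoint T (T x)‖
  nlinarith [norm_nonneg (T x), mul_nonneg hC.le (norm_nonneg (adjoint T (T x)))]

lemma adjoint_apply_starProjection_range (T : E →L[𝕜] G) [T.range.HasOrthogonalProjection]
    (y : G) : adjoint T (T.range.starProjection y) = adjoint T y := by
  have : y - T.range.starProjection y ∈ (adjoint T).ker := by
    rw [← orthogonal_range]
    exact Submodule.sub_starProjection_mem_orthogonal y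
  rw [LinearMap.mem_ker, coe_coe, map_sub, sub_eq_zero] at this
  exact this.symm

theorem isClosed_range_adjoint (T : E →L[𝕜] G) (hT : IsClosed (T.range : Set G)) :
    IsClosed ((adjoint T).range : Set E) := by
  have : CompleteSpace T.range := hT.completeSpace_coe
  obtain ⟨C, hC⟩ := T.exists_antilipschitzWith_adjoint_comp_subtypeL_range hT
  have hrange : Set.range (adjoint T ∘L T.range.subtypeL) = (adjoint T).range := by
    refine subset_antisymm (by rintro _ ⟨y, rfl⟩; exact ⟨y, rfl⟩) ?_
    rintro _ ⟨y, rfl⟩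
    exact ⟨T.range.orthogonalProjectionOnto y, T.adjoint_apply_starProjection_range y⟩
  rw [← hrange]
  exact hC.isClosed_range (ContinuousLinearMap.uniformContinuous _)

theorem isClosed_range_adjoint_iff (T : E →L[𝕜] G) :
    IsClosed ((adjoint T).range : Set E) ↔ IsClosed (T.range : Set G) :=
  ⟨fun h ↦ by simpa using (adjoint T).isClosed_range_adjoint h, T.isClosed_range_adjoint⟩

end ClosedRange

section ProdL2

variable {𝕜 F H K : Type*} [NormedField 𝕜]
  [NormedAddCommGroup F] [NormedSpace 𝕜 F]
  [NormedAddCommGroup H] [NormedSpace 𝕜 H]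
  [NormedAddCommGroup K] [NormedSpace 𝕜 K]

noncomputable def prodL2 (A : F →L[𝕜] H) (B : F →L[𝕜] K) : F →L[𝕜] WithLp 2 (H × K) :=
  (WithLp.prodContinuousLinearEquiv 2 𝕜 H K).symm ∘L A.prod B

lemma isClosed_range_prodL2_iff (A : F →L[𝕜] H) (B : F →L[𝕜] K) :
    IsClosed ((A.prodL2 B).range : Set (WithLp 2 (H × K))) ↔
      IsClosed (Set.range fun x : F ↦ (A x, B x)) := by
  rw [LinearMap.coe_range, coe_coe, show ⇑(A.prodL2 B) = (WithLp.homeomorphProd 2 H K).symm ∘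
    fun x ↦ (A x, B x) from rfl, Set.range_comp]
  exact (WithLp.homeomorphProd 2 H K).symm.isClosed_image

end ProdL2

section AdjointProdL2

variable {𝕜 F H K : Type*} [RCLike 𝕜]
  [NormedAddCommGroup F] [InnerProductSpace 𝕜 F] [CompleteSpace F]
  [NormedAddCommGroup H] [InnerProductSpace 𝕜 H] [CompleteSpace H]
  [NormedAddCommGroup K] [InnerProductSpace 𝕜 K] [CompleteSpace K]

lemma adjoint_prodL2 (A : F →L[𝕜] H) (B : F →L[𝕜] K) :
    adjoint (A.prodL2 B) = (adjoint A).coprod (adjoint B) ∘L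
      (WithLp.prodContinuousLinearEquiv 2 𝕜 H K : WithLp 2 (H × K) →L[𝕜] H × K) := by
  refine ((eq_adjoint_iff _ _).mpr fun y x ↦ ?_).symm
  simp [prodL2, inner_add_left, adjoint_inner_left]

lemma range_adjoint_prodL2 (A : F →L[𝕜] H) (B : F →L[𝕜] K) :
    (adjoint (A.prodL2 B)).range = (adjoint A).range ⊔ (adjoint B).range := by
  rw [adjoint_prodL2, toLinearMap_comp, LinearMap.range_comp_of_range_eq_top, range_coprod]
  exact LinearMap.range_eq_top.mpr (WithLp.prodContinuousLinearEquiv 2 𝕜 H K).surjective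

end AdjointProdL2

end ContinuousLinearMap

theorem stmt_7_general {F H K : Type*}
    [NormedAddCommGroup F] [InnerProductSpace ℂ F] [CompleteSpace F]
    [NormedAddCommGroup H] [InnerProductSpace ℂ H] [CompleteSpace H]
    [NormedAddCommGroup K] [InnerProductSpace ℂ K] [CompleteSpace K]
    (A : F →L[ℂ] H) (B : F →L[ℂ] K) :
    IsClosed (Set.range fun x : F => ((A x, B x) : H × K)) ↔
      IsClosed ((LinearMap.range (ContinuousLinearMap.adjoint A : H →ₗ[ℂ] F) ⊔
        LinearMap.range (ContinuousLinearMap.adjoint B : K →ₗ[ℂ] F) : Submodule ℂ F) : Set F) := by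
  rw [← A.isClosed_range_prodL2_iff B, ← A.range_adjoint_prodL2 B,
    ContinuousLinearMap.isClosed_range_adjoint_iff]

theorem stmt_7 {F H K : Type*}
    [NormedAddCommGroup F] [InnerProductSpace ℂ F] [CompleteSpace F]
    [NormedAddCommGroup H] [InnerProductSpace ℂ H] [CompleteSpace H]
    [NormedAddCommGroup K] [InnerProductSpace ℂ K] [CompleteSpace K]
    (A : F →L[ℂ] H) (B : F →L[ℂ] K)
    (hker : LinearMap.ker (A : F →ₗ[ℂ] H) ≤ LinearMap.ker (B : F →ₗ[ℂ] K)) :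
    IsClosed (Set.range fun x : F => ((A x, B x) : H × K)) ↔
      IsClosed ((LinearMap.range (ContinuousLinearMap.adjoint A : H →ₗ[ℂ] F) ⊔
        LinearMap.range (ContinuousLinearMap.adjoint B : K →ₗ[ℂ] F) : Submodule ℂ F) : Set F) :=
  stmt_7_general A B
end

section
/- Let F, H, K be complex Hilbert spaces and A : F → H, B : F → K bounded linear operators. The operator equation B = X ∘ A has a solution X that is a bounded linear operator from H to K if and only if range(B*) ⊆ range(A*). -/
/-!
Douglas' range inclusion lemma, in the form: if `range S ⊆ range T` for bounded operators
`S : K → F`, `T : E → F` with `E` a Hilbert space, then `S = T ∘ G` for a bounded `G : K → E`.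
Restricting `T` to `(ker T)ᗮ` makes it injective without shrinking its range, so `G := T⁻¹ ∘ S`
is a well-defined linear map; it is bounded by the closed graph theorem, since a limit of
`G uₙ` is pinned down by its image under the continuous injection `T`.

Applied to `T = A*` and `S = B*`, taking adjoints turns `B* = A* ∘ G` into `B = G* ∘ A`; the
converse is `B* = A* ∘ X*`.
-/

open ContinuousLinearMap

section ClosedGraph

variable {𝕜 E K F : Type*} [NontriviallyNormedField 𝕜]
  [NormedAddCommGroup E] [NormedSpace 𝕜 E] [CompleteSpace E]
  [NormedAddCommGroup K] [NormedSpace 𝕜 K] [CompleteSpace K]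
  [NormedAddCommGroup F] [NormedSpace 𝕜 F]

theorem LinearMap.continuous_of_injective_of_continuous_comp (g : K →ₗ[𝕜] E) (T : E →L[𝕜] F)
    (hT : Function.Injective T) (hTg : Continuous (T ∘ g)) : Continuous g :=
  g.continuous_of_seq_closed_graph fun _u x y hu hgu =>
    hT <| tendsto_nhds_unique ((T.continuous.tendsto y).comp hgu) ((hTg.tendsto x).comp hu)

theorem ContinuousLinearMap.exists_comp_eq_of_injective_of_range_le {T : E →L[𝕜] F}
    {S : K →L[𝕜] F} (hT : Function.Injective T) (hST : S.range ≤ T.range) :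
    ∃ G : K →L[𝕜] E, T ∘L G = S := by
  obtain ⟨L, hL⟩ := (T : E →ₗ[𝕜] F).exists_leftInverse_of_injective (LinearMap.ker_eq_bot.mpr hT)
  have hTL : ∀ k, T (L (S k)) = S k := by
    intro k
    obtain ⟨e, he⟩ := hST ⟨k, rfl⟩
    rw [← coe_coe S, ← he, coe_coe]
    exact congrArg T (LinearMap.congr_fun hL e)
  have hcont : Continuous (L ∘ₗ (S : K →ₗ[𝕜] F)) :=
    LinearMap.continuous_of_injective_of_continuous_comp _ T hT <| by
      simpa only [LinearMap.coe_comp, Function.comp_def, coe_coe, hTL] using S.continuous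
  exact ⟨⟨_, hcont⟩, ext hTL⟩

end ClosedGraph

section OrthogonalKer

variable {𝕜 E F : Type*} [RCLike 𝕜] [NormedAddCommGroup E] [InnerProductSpace 𝕜 E]
  [NormedAddCommGroup F] [NormedSpace 𝕜 F]

theorem ContinuousLinearMap.injective_comp_subtypeL_orthogonal_ker (T : E →L[𝕜] F) :
    Function.Injective (T ∘L T.kerᗮ.subtypeL) := by
  refine (injective_iff_map_eq_zero _).mpr fun m hm => ?_
  have : (m : E) ∈ T.ker ⊓ T.kerᗮ := ⟨hm, m.2⟩
  rw [Submodule.inf_orthogonal_eq_bot] at this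
  simpa using this

theorem ContinuousLinearMap.range_le_range_comp_subtypeL_orthogonal_ker [CompleteSpace E]
    (T : E →L[𝕜] F) : T.range ≤ (T ∘L T.kerᗮ.subtypeL).range := by
  rintro _ ⟨e, rfl⟩
  refine ⟨⟨e - T.ker.starProjection e, T.ker.sub_starProjection_mem_orthogonal e⟩, ?_⟩
  have : T (T.ker.starProjection e) = 0 := T.ker.starProjection_apply_mem e
  simp [this]

theorem ContinuousLinearMap.exists_comp_eq_of_range_le_s9 [CompleteSpace E] {K : Type*}
    [NormedAddCommGroup K] [NormedSpace 𝕜 K] [CompleteSpace K] {T : E →L[𝕜] F}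
    {S : K →L[𝕜] F} (hST : S.range ≤ T.range) : ∃ G : K →L[𝕜] E, T ∘L G = S := by
  obtain ⟨G, hG⟩ := exists_comp_eq_of_injective_of_range_le
    T.injective_comp_subtypeL_orthogonal_ker
    (hST.trans T.range_le_range_comp_subtypeL_orthogonal_ker)
  exact ⟨T.kerᗮ.subtypeL ∘L G, by rw [← comp_assoc, hG]⟩

end OrthogonalKer

theorem stmt_9 {F H K : Type*}
    [NormedAddCommGroup F] [InnerProductSpace ℂ F] [CompleteSpace F]
    [NormedAddCommGroup H] [InnerProductSpace ℂ H] [CompleteSpace H]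
    [NormedAddCommGroup K] [InnerProductSpace ℂ K] [CompleteSpace K]
    (A : F →L[ℂ] H) (B : F →L[ℂ] K) :
    (∃ X : H →L[ℂ] K, ∀ x : F, X (A x) = B x) ↔
      LinearMap.range (ContinuousLinearMap.adjoint B : K →ₗ[ℂ] F) ≤
        LinearMap.range (ContinuousLinearMap.adjoint A : H →ₗ[ℂ] F) := by
  simp only [← ContinuousLinearMap.ext_iff, ← comp_apply]
  constructor
  · rintro ⟨X, rfl⟩
    rw [adjoint_comp]
    exact LinearMap.range_comp_le_range _ _
  · intro hBA
    obtain ⟨G, hG⟩ := exists_comp_eq_of_range_le_s9 hBA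
    refine ⟨adjoint G, ?_⟩
    rw [← adjoint_adjoint A, ← adjoint_comp, hG, adjoint_adjoint]
end

section
/- Let F, H, K be complex Hilbert spaces and A : F → H, B : F → K bounded linear operators. The following are equivalent: (i) for every sequence (x_n) in F, if A x_n → 0 then B x_n → 0; (ii) range(B*) ⊆ range(A*). -/
/-!
Both conditions are equivalent to a Douglas-type bound `‖B x‖ ≤ C ‖A x‖`.

The sequential condition says that `B` is continuous at `0` for the seminorm `‖A ·‖`, and by
homogeneity this is the bound. Given the bound, `x ↦ ⟪B† k, x⟫ = ⟪k, B x⟫` is dominated by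
`‖A ·‖`, so it factors through `A` as a bounded functional on `range A`; Hahn–Banach extends it
to `H` and Riesz represents it as `⟪h, A ·⟫ = ⟪A† h, ·⟫`. Conversely, if every `B† k` is some
`A† h`, then `⟪B x, k⟫ = ⟪A x, h⟫`, so the functionals `⟪B x, ·⟫` with `‖A x‖ ≤ 1` are pointwise
bounded on `K`, and Banach–Steinhaus bounds their norms `‖B x‖` uniformly.
-/

open Filter Topology

section Normed

variable {𝕜 E F G : Type*} [RCLike 𝕜]
  [SeminormedAddCommGroup E] [NormedSpace 𝕜 E]
  [SeminormedAddCommGroup F] [NormedSpace 𝕜 F]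
  [SeminormedAddCommGroup G] [NormedSpace 𝕜 G]

theorem LinearMap.norm_le_div_mul_norm_of_norm_le_imp (A : E →ₗ[𝕜] F) (B : E →ₗ[𝕜] G)
    {δ C : ℝ} (hδ : 0 < δ) (h : ∀ x, ‖A x‖ ≤ δ → ‖B x‖ ≤ C) (x : E) :
    ‖B x‖ ≤ C / δ * ‖A x‖ := by
  have hscale : ∀ t : ℝ, 0 ≤ t → t * ‖A x‖ ≤ δ → t * ‖B x‖ ≤ C := fun t ht hAt => by
    have hA : ‖A ((t : 𝕜) • x)‖ ≤ δ := by simpa [norm_smul, abs_of_nonneg ht] using hAt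
    simpa [norm_smul, abs_of_nonneg ht] using h _ hA
  rcases (norm_nonneg (A x)).eq_or_lt with hAx | hAx
  · have hBx : ‖B x‖ = 0 := by
      by_contra hBx
      have hBpos := lt_of_le_of_ne (norm_nonneg _) (Ne.symm hBx)
      have := hscale ((|C| + 1) / ‖B x‖) (by positivity) (by rw [← hAx]; simpa using hδ.le)
      rw [div_mul_cancel₀ _ hBx] at this
      linarith [le_abs_self C]
    rw [hBx, ← hAx, mul_zero]
  · have := hscale (δ / ‖A x‖) (by positivity) (by rw [div_mul_cancel₀ _ hAx.ne'])
    rw [div_mul_eq_mul_div, div_le_iff₀ hAx] at this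
    rw [div_mul_eq_mul_div, le_div_iff₀ hδ]
    linarith

theorem LinearMap.tendsto_imp_tendsto_iff_exists_norm_le_mul_norm
    (A : E →ₗ[𝕜] F) (B : E →ₗ[𝕜] G) :
    (∀ x : ℕ → E, Tendsto (fun n => A (x n)) atTop (𝓝 0) →
        Tendsto (fun n => B (x n)) atTop (𝓝 0)) ↔
      ∃ C, ∀ x, ‖B x‖ ≤ C * ‖A x‖ := by
  constructor
  · intro hseq
    suffices ∃ n : ℕ, ∀ x, ‖A x‖ ≤ 1 / (n + 1) → ‖B x‖ ≤ 1 by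
      obtain ⟨n, hn⟩ := this
      exact ⟨_, A.norm_le_div_mul_norm_of_norm_le_imp B (by positivity) hn⟩
    by_contra! hbad
    choose x hAx hBx using hbad
    have hA : Tendsto (fun n => A (x n)) atTop (𝓝 0) :=
      squeeze_zero_norm hAx tendsto_one_div_add_atTop_nhds_zero_nat
    have := (hseq x hA).norm.eventually (gt_mem_nhds (a := 1) (by simp))
    obtain ⟨n, hn⟩ := this.exists
    exact (hBx n).not_gt (by simpa using hn)
  · rintro ⟨C, hC⟩ x hx
    refine squeeze_zero_norm (fun n => hC (x n)) ?_
    simpa using hx.norm.const_mul C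

theorem LinearMap.exists_strongDual_comp_eq_of_norm_le (A : E →ₗ[𝕜] F) (f : E →ₗ[𝕜] 𝕜)
    {C : ℝ} (h : ∀ x, ‖f x‖ ≤ C * ‖A x‖) :
    ∃ g : StrongDual 𝕜 F, ∀ x, g (A x) = f x := by
  have hker : LinearMap.ker A ≤ LinearMap.ker f := fun x hx => by
    have hx' := h x
    rw [LinearMap.mem_ker.mp hx, norm_zero, mul_zero, norm_le_zero_iff] at hx'
    exact hx'
  let φ : LinearMap.range A →ₗ[𝕜] 𝕜 :=
    (LinearMap.ker A).liftQ f hker ∘ₗ A.quotKerEquivRange.symm.toLinearMap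
  have hφ : ∀ x, φ ⟨A x, A.mem_range_self x⟩ = f x := fun x => by
    simp only [φ, LinearMap.comp_apply, LinearEquiv.coe_coe,
      LinearMap.quotKerEquivRange_symm_apply_image, Submodule.mkQ_apply, Submodule.liftQ_apply]
  have hφC : ∀ y, ‖φ y‖ ≤ C * ‖y‖ := by
    rintro ⟨_, x, rfl⟩
    rw [hφ]
    exact h x
  obtain ⟨g, hg, -⟩ := exists_extension_norm_eq _ (φ.mkContinuous C hφC)
  exact ⟨g, fun x => (hg ⟨A x, A.mem_range_self x⟩).trans (hφ x)⟩

end Normed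

section Hilbert

variable {𝕜 E F G : Type*} [RCLike 𝕜]
  [NormedAddCommGroup E] [InnerProductSpace 𝕜 E] [CompleteSpace E]
  [NormedAddCommGroup F] [InnerProductSpace 𝕜 F] [CompleteSpace F]
  [NormedAddCommGroup G] [InnerProductSpace 𝕜 G] [CompleteSpace G]

local notation "⟪" x ", " y "⟫" => @inner 𝕜 _ _ x y

theorem ContinuousLinearMap.mem_range_adjoint_of_norm_inner_le (A : E →L[𝕜] F) {z : E} {C : ℝ}
    (h : ∀ x, ‖⟪z, x⟫‖ ≤ C * ‖A x‖) :
    z ∈ LinearMap.range (A.adjoint : F →ₗ[𝕜] E) := by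
  obtain ⟨g, hg⟩ := (A : E →ₗ[𝕜] F).exists_strongDual_comp_eq_of_norm_le (innerₛₗ 𝕜 z) h
  refine ⟨(InnerProductSpace.toDual 𝕜 F).symm g, ext_inner_right 𝕜 fun x => ?_⟩
  rw [ContinuousLinearMap.coe_coe, ContinuousLinearMap.adjoint_inner_left,
    InnerProductSpace.toDual_symm_apply]
  exact hg x

theorem ContinuousLinearMap.exists_norm_le_mul_norm_of_range_adjoint_le
    (A : E →L[𝕜] F) (B : E →L[𝕜] G)
    (h : LinearMap.range (B.adjoint : G →ₗ[𝕜] E) ≤ LinearMap.range (A.adjoint : F →ₗ[𝕜] E)) :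
    ∃ C, ∀ x, ‖B x‖ ≤ C * ‖A x‖ := by
  have hpt : ∀ k, ∃ c, ∀ x : {x : E // ‖A x‖ ≤ 1}, ‖innerSL 𝕜 (B x) k‖ ≤ c := fun k => by
    obtain ⟨y, hy⟩ := h ⟨k, rfl⟩
    rw [ContinuousLinearMap.coe_coe, ContinuousLinearMap.coe_coe] at hy
    refine ⟨‖y‖, fun ⟨x, hx⟩ => ?_⟩
    calc ‖innerSL 𝕜 (B x) k‖ = ‖⟪A x, y⟫‖ := by
          rw [innerSL_apply_apply, ← ContinuousLinearMap.adjoint_inner_right, ← hy,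
            ContinuousLinearMap.adjoint_inner_right]
      _ ≤ ‖A x‖ * ‖y‖ := norm_inner_le_norm _ _
      _ ≤ ‖y‖ := by nlinarith [norm_nonneg y]
  obtain ⟨C, hC⟩ := banach_steinhaus hpt
  refine ⟨C, fun x => ?_⟩
  simpa using (A : E →ₗ[𝕜] F).norm_le_div_mul_norm_of_norm_le_imp (B : E →ₗ[𝕜] G) one_pos
    (fun x hx => by simpa using hC ⟨x, hx⟩) x

theorem ContinuousLinearMap.range_adjoint_le_iff_exists_norm_le_mul_norm
    (A : E →L[𝕜] F) (B : E →L[𝕜] G) :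
    LinearMap.range (B.adjoint : G →ₗ[𝕜] E) ≤ LinearMap.range (A.adjoint : F →ₗ[𝕜] E) ↔
      ∃ C, ∀ x, ‖B x‖ ≤ C * ‖A x‖ := by
  refine ⟨A.exists_norm_le_mul_norm_of_range_adjoint_le B, fun ⟨C, hC⟩ => ?_⟩
  rintro _ ⟨k, rfl⟩
  refine A.mem_range_adjoint_of_norm_inner_le (C := ‖k‖ * C) fun x => ?_
  calc ‖⟪B.adjoint k, x⟫‖ = ‖⟪k, B x⟫‖ := by rw [ContinuousLinearMap.adjoint_inner_left]
    _ ≤ ‖k‖ * ‖B x‖ := norm_inner_le_norm _ _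
    _ ≤ ‖k‖ * (C * ‖A x‖) := by gcongr; exact hC x
    _ = ‖k‖ * C * ‖A x‖ := by ring

end Hilbert

theorem stmt_12 {F H K : Type*}
    [NormedAddCommGroup F] [InnerProductSpace ℂ F] [CompleteSpace F]
    [NormedAddCommGroup H] [InnerProductSpace ℂ H] [CompleteSpace H]
    [NormedAddCommGroup K] [InnerProductSpace ℂ K] [CompleteSpace K]
    (A : F →L[ℂ] H) (B : F →L[ℂ] K) :
    (∀ x : ℕ → F, Filter.Tendsto (fun n => A (x n)) Filter.atTop (nhds 0) →
        Filter.Tendsto (fun n => B (x n)) Filter.atTop (nhds 0)) ↔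
      LinearMap.range (ContinuousLinearMap.adjoint B : K →ₗ[ℂ] F) ≤
        LinearMap.range (ContinuousLinearMap.adjoint A : H →ₗ[ℂ] F) :=
  ((A : F →ₗ[ℂ] H).tendsto_imp_tendsto_iff_exists_norm_le_mul_norm (B : F →ₗ[ℂ] K)).trans
    (A.range_adjoint_le_iff_exists_norm_le_mul_norm B).symm
end
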